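/- In the inverse of the transformation (ξ,η) = (H̃z, n⁻¹1_nᵀz), written z = η·1_n + Sξ with S ∈ ℝ^{n×(n-1)}, the matrix S satisfies 1_nᵀS = 0 and |s_{ij}| < 1 for all entries. -/
import Mathlib


open Matrix BigOperators

/-- Inverse of the transformation `(ξ,η) = (H̃z, n⁻¹1ᵀz)` for a spanning tree on
`n+1` vertices: there exists `S` with `z = η·1 + Sξ`, `1ᵀS = 0`, and all entries of
`S` of absolute value less than 1. -/
theorem spanning_tree_inverse_transformation_matrix
    (n : ℕ) (head tail : Fin n → Fin (n + 1))
    (Ht : Matrix (Fin n) (Fin (n + 1)) ℝ)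
    (hHt : ∀ i j, Ht i j = if j = head i then 1 else if j = tail i then -1 else 0)
    (hconn : ∀ j k : Fin (n + 1), Relation.ReflTransGen
      (fun a b => ∃ i, (head i = a ∧ tail i = b) ∨ (head i = b ∧ tail i = a)) j k) :
    ∃ S : Matrix (Fin (n + 1)) (Fin n) ℝ,
      (∀ z : Fin (n + 1) → ℝ,
        z = fun i => (∑ j, z j) / (n + 1) + S.mulVec (Ht.mulVec z) i) ∧
      (∀ j, ∑ i, S i j = 0) ∧
      (∀ i j, |S i j| < 1) := by
  -- value of a row of Ht applied to a vector, when the edge is not a loop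
  have hmul : ∀ (i : Fin n), head i ≠ tail i → ∀ z : Fin (n + 1) → ℝ,
      Ht.mulVec z i = z (head i) - z (tail i) := by
    intro i hne z
    simp only [Matrix.mulVec, dotProduct]
    have h : ∀ j, Ht i j * z j =
        (if head i = j then z j else 0) + (if tail i = j then -(z j) else 0) := by
      intro j
      rw [hHt]
      rcases eq_or_ne j (head i) with h1 | h1
      · rw [if_pos h1, if_pos h1.symm,
          if_neg (fun h2 : tail i = j => hne (h2.trans h1).symm), one_mul, add_zero]
      · rw [if_neg h1, if_neg (fun h2 : head i = j => h1 h2.symm)]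
        rcases eq_or_ne j (tail i) with h2 | h2
        · rw [if_pos h2, if_pos h2.symm, neg_one_mul, zero_add]
        · rw [if_neg h2, if_neg (fun h3 : tail i = j => h2 h3.symm), zero_mul, add_zero]
    rw [Finset.sum_congr rfl fun j _ => h j]
    rw [Finset.sum_add_distrib, Finset.sum_ite_eq, Finset.sum_ite_eq]
    simp [sub_eq_add_neg]
  -- constancy of vectors in the kernel
  have hconst : ∀ u : Fin (n + 1) → ℝ, Ht.mulVec u = 0 → ∀ a b, u a = u b := by
    intro u hu a b
    induction hconn a b with
    | refl => rfl
    | @tail m c h step ih =>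
      obtain ⟨i, hi⟩ := step
      by_cases hmc : m = c
      · rw [ih, hmc]
      · have hne : head i ≠ tail i := by
          rcases hi with ⟨h1, h2⟩ | ⟨h1, h2⟩
          · rw [h1, h2]; exact fun h => hmc h
          · rw [h1, h2]; exact fun h => hmc h.symm
        have hv := hmul i hne u
        rw [hu] at hv
        have h0 : u (head i) = u (tail i) := by
          have hv' : (0 : ℝ) = u (head i) - u (tail i) := hv
          linarith
        rcases hi with ⟨h1, h2⟩ | ⟨h1, h2⟩
        · rw [ih, ← h1, ← h2, h0]
        · rw [ih, ← h1, ← h2, h0]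
  -- injectivity fact
  have hzero : ∀ u : Fin (n + 1) → ℝ, Ht.mulVec u = 0 → (∑ j, u j) = 0 → u = 0 := by
    intro u hu hs
    have h1 : ∀ a, u a = u 0 := fun a => hconst u hu a 0
    have h2 : (n + 1 : ℝ) * u 0 = 0 := by
      rw [← hs, Finset.sum_congr rfl fun a _ => h1 a, Finset.sum_const, Finset.card_univ,
        Fintype.card_fin, nsmul_eq_mul]
      push_cast; ring
    have h3 : u 0 = 0 :=
      (mul_eq_zero.mp h2).resolve_left (by positivity)
    funext a; rw [h1 a, h3]; rfl
  -- the linear map F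
  let F : (Fin (n + 1) → ℝ) →ₗ[ℝ] (Fin n → ℝ) × ℝ :=
    { toFun := fun z => (Ht.mulVec z, ∑ j, z j)
      map_add' := by
        intro x y
        simp [Matrix.mulVec_add, Finset.sum_add_distrib, Prod.ext_iff]
      map_smul' := by
        intro c x
        simp [Matrix.mulVec_smul, Finset.mul_sum, Prod.ext_iff] }
  have hF : ∀ z, F z = (Ht.mulVec z, ∑ j, z j) := fun _ => rfl
  have hFinj : Function.Injective F := by
    rw [injective_iff_map_eq_zero]
    intro w hw
    have hw1 : Ht.mulVec w = 0 := congrArg Prod.fst hw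
    have hw2 : (∑ j, w j) = 0 := congrArg Prod.snd hw
    exact hzero w hw1 hw2
  have hdim : Module.finrank ℝ (Fin (n + 1) → ℝ) =
      Module.finrank ℝ ((Fin n → ℝ) × ℝ) := by
    simp [Module.finrank_prod, Module.finrank_fin_fun]
  have hFsurj : Function.Surjective F :=
    (LinearMap.injective_iff_surjective_of_finrank_eq_finrank hdim).mp hFinj
  -- the constant solution
  obtain ⟨u, hu⟩ := hFsurj (0, 1)
  have hu1 : Ht.mulVec u = 0 := congrArg Prod.fst hu
  have hu2 : (∑ j, u j) = (1 : ℝ) := congrArg Prod.snd hu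
  have huc : ∀ i, u i = 1 / (n + 1) := by
    intro i
    have h1 : ∀ a, u a = u i := fun a => hconst u hu1 a i
    have h2 : (n + 1 : ℝ) * u i = 1 := by
      have hs' : (∑ j, u j) = (n + 1 : ℝ) * u i := by
        rw [Finset.sum_congr rfl fun a _ => h1 a, Finset.sum_const, Finset.card_univ,
          Fintype.card_fin, nsmul_eq_mul]
        push_cast; ring
      rw [← hs', hu2]
    rw [eq_div_iff (by positivity : (n : ℝ) + 1 ≠ 0)]
    linarith [mul_comm (u i) ((n : ℝ) + 1)]
  -- columns of S
  choose zc hzc using fun k => hFsurj (Pi.single k 1, 0)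
  have hzc1 : ∀ k, Ht.mulVec (zc k) = Pi.single k 1 := fun k => congrArg Prod.fst (hzc k)
  have hzc2 : ∀ k, (∑ j, zc k j) = (0 : ℝ) := fun k => congrArg Prod.snd (hzc k)
  refine ⟨Matrix.of fun i k => zc k i, ?_, ?_, ?_⟩
  · -- inverse identity
    intro z
    set ξ := Ht.mulVec z with hξ
    have hsingle : (∑ k, ξ k • (Pi.single k 1 : Fin n → ℝ)) = ξ := by
      funext j
      simp [Finset.sum_apply, Pi.single_apply, mul_ite, Finset.sum_ite_eq]
    have hveq : ((∑ j, z j) • u + ∑ k, ξ k • zc k) = z := by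
      apply hFinj
      have e1 : Ht.mulVec ((∑ j, z j) • u + ∑ k, ξ k • zc k) = ξ := by
        rw [← Matrix.mulVecLin_apply, map_add, _root_.map_smul, map_sum]
        simp only [_root_.map_smul, Matrix.mulVecLin_apply, hu1, hzc1, smul_zero, zero_add]
        simpa using hsingle
      have e2 : (∑ i, ((∑ j, z j) • u + ∑ k, ξ k • zc k) i) = ∑ j, z j := by
        simp only [Pi.add_apply, Pi.smul_apply, Finset.sum_apply, smul_eq_mul]
        rw [Finset.sum_add_distrib, ← Finset.mul_sum, hu2, mul_one]
        have hz0 : (∑ x : Fin (n + 1), ∑ k, ξ k * zc k x) = 0 := by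
          rw [Finset.sum_comm]
          simp [← Finset.mul_sum, hzc2]
        rw [hz0, add_zero]
      rw [hF, hF, e1, e2, hξ]
    funext i
    have hvi := congrFun hveq i
    rw [← hvi]
    simp only [Pi.add_apply, Pi.smul_apply, Finset.sum_apply, smul_eq_mul, huc i]
    have : (Matrix.of fun i k => zc k i).mulVec ξ i = ∑ k, zc k i * ξ k := by
      simp [Matrix.mulVec, dotProduct]
    rw [this, mul_one_div]
    congr 1
    exact Finset.sum_congr rfl fun k _ => mul_comm _ _
  · -- column sums
    intro j
    simpa using hzc2 j
  · -- entry bounds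
    intro i k
    simp only [Matrix.of_apply]
    set z := zc k with hz
    have hzv : Ht.mulVec z = Pi.single k 1 := hzc1 k
    have hzs : (∑ j, z j) = 0 := hzc2 k
    -- crossing lemma
    have hcross : ∀ (P : Fin (n + 1) → Prop) a b, P a → ¬ P b → ∃ x y, P x ∧ ¬ P y ∧
        ∃ i, (head i = x ∧ tail i = y) ∨ (head i = y ∧ tail i = x) := by
      intro P a b ha
      induction hconn a b with
      | refl => intro h; exact absurd ha h
      | @tail m c h step ih =>
        intro hc
        by_cases hm : P m
        · exact ⟨m, c, hm, hc, step⟩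
        · exact ih hm
    -- any threshold separating values is crossed by edge k, upward
    have hstep : ∀ t : ℝ, (∃ a, z a ≤ t) → (∃ b, t < z b) →
        z (tail k) ≤ t ∧ t < z (head k) ∧ z (head k) = z (tail k) + 1 := by
      rintro t ⟨a, ha⟩ ⟨b, hb⟩
      obtain ⟨x, y, hx, hy, i, hi⟩ :=
        hcross (fun v => z v ≤ t) a b ha (not_le.mpr hb)
      replace hy : t < z y := not_le.mp hy
      have hxy : x ≠ y := fun h => hy.not_ge (h ▸ hx)
      have hne : head i ≠ tail i := by
        rcases hi with ⟨h1, h2⟩ | ⟨h1, h2⟩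
        · rw [h1, h2]; exact hxy
        · rw [h1, h2]; exact fun h => hxy h.symm
      have hv := hmul i hne z
      rw [hzv] at hv
      have hsv : (Pi.single k 1 : Fin n → ℝ) i = if i = k then 1 else 0 :=
        Pi.single_apply k 1 i
      rcases hi with ⟨h1, h2⟩ | ⟨h1, h2⟩
      · -- head i = x, tail i = y : impossible since z x ≤ t < z y
        exfalso
        have : z x - z y = if i = k then 1 else 0 := by rw [← h1, ← h2, ← hv, hsv]
        split_ifs at this <;> linarith
      · -- head i = y, tail i = x
        have hd : z y - z x = if i = k then 1 else 0 := by rw [← h1, ← h2, ← hv, hsv]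
        have hik : i = k := by
          by_contra hik
          rw [if_neg hik] at hd
          linarith
        rw [if_pos hik] at hd
        rw [hik] at h1 h2
        rw [h1, h2]
        exact ⟨hx, hy, by linarith⟩
    -- bound on the spread of z
    obtain ⟨bmax, _, hM⟩ := Finset.exists_max_image Finset.univ z ⟨0, Finset.mem_univ 0⟩
    obtain ⟨amin, _, hm⟩ := Finset.exists_max_image Finset.univ (fun j => -z j)
      ⟨0, Finset.mem_univ 0⟩
    have hmle : ∀ j, z amin ≤ z j := by
      intro j; have := hm j (Finset.mem_univ j); simpa using this
    have hMge : ∀ j, z j ≤ z bmax := fun j => hM j (Finset.mem_univ j)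
    have hspread : z bmax ≤ z amin + 1 := by
      rcases le_or_gt (z bmax) (z amin) with h | h
      · linarith
      · have h1 := hstep (z amin) ⟨amin, le_refl _⟩ ⟨bmax, h⟩
        by_contra hcon
        push_neg at hcon
        have h2 := hstep (z amin + 1) ⟨amin, by linarith⟩ ⟨bmax, hcon⟩
        obtain ⟨h1a, h1b, h1c⟩ := h1
        obtain ⟨h2a, h2b, h2c⟩ := h2
        linarith
    have hdiff : ∀ a b, z a - z b ≤ 1 := by
      intro a b
      have := hMge a
      have := hmle b
      linarith
    -- conclude
    have hsum : (n + 1 : ℝ) * z i = ∑ j, (z i - z j) := by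
      rw [Finset.sum_sub_distrib, hzs, Finset.sum_const, Finset.card_univ,
        Fintype.card_fin, nsmul_eq_mul, sub_zero]
      push_cast; ring
    have habs : |(n + 1 : ℝ) * z i| ≤ n := by
      rw [hsum, ← Finset.add_sum_erase Finset.univ _ (Finset.mem_univ i), sub_self,
        zero_add]
      calc |∑ j ∈ Finset.univ.erase i, (z i - z j)|
          ≤ ∑ j ∈ Finset.univ.erase i, |z i - z j| := Finset.abs_sum_le_sum_abs _ _
        _ ≤ ∑ _j ∈ Finset.univ.erase i, (1 : ℝ) := by
            refine Finset.sum_le_sum fun j _ => ?_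
            rw [abs_le]
            exact ⟨by linarith [hdiff j i], hdiff i j⟩
        _ = n := by
            rw [Finset.sum_const, Finset.card_erase_of_mem (Finset.mem_univ i),
              Finset.card_univ, Fintype.card_fin]
            simp
    have hpos : (0 : ℝ) < n + 1 := by positivity
    rw [abs_mul, abs_of_pos hpos] at habs
    nlinarith [abs_nonneg (z i)]
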